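/- Let A be a finite-dimensional Hopf algebra over a field k with k-basis 𝔸. Equip B := A ⊗_k A with the right A-action (x ⊗ y) ·_φ a := Σ x a⁽¹⁾ ⊗ S(a⁽²⁾) y, and equip A ⊗_k A with the left A-module structure via the comultiplication, a · (x ⊗ y) := Σ a⁽¹⁾x ⊗ a⁽²⁾y. Then the elements Y_{abc} := Σ (a⁽¹⁾ ⊗ S(a⁽²⁾)b) ⊗_A (1 ⊗ c), for a, b, c ∈ 𝔸, form a k-basis of the balanced tensor product B ⊗_A (A ⊗_k A). -/

import Mathlib

/-!
The Galois map `τ (a ⊗ b) = Δ(a) (1 ⊗ b)` of a Hopf algebra is bijective, with inverse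
`a ⊗ b ↦ Σ a⁽¹⁾ ⊗ S(a⁽²⁾) b`, and it turns the twisted action `z ·φ a` into right multiplication
by `a ⊗ 1`. Hence `B` is, as a right `A`-module, `A ⊗ A` with `A` acting on the first factor
only, and `(p ⊗ q) ⊗ w ↦ Δ(p) w ⊗ q` identifies `B ⊗_A M` with `M ⊗ A` for `M = A ⊗ A`.
This identification sends `Y_{abc}` to `τ (a ⊗ c) ⊗ b`, so `a ⊗ b ⊗ c ↦ Y_{abc}` is injective.
It is surjective because `τ⁻¹ (a ⊗ b) = (1 ⊗ b) ·φ a`: balancing turns every `(x ⊗ y) ⊗ w` into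
a sum of terms `(1 ⊗ b) ⊗ Δ(a) (1 ⊗ c) = Y_{abc}`.
-/

open TensorProduct

variable (k A : Type*) [Field k] [Ring A] [HopfAlgebra k A]

/-- The canonical `k`-linear identification `A ⊗[k] A ≃ A ⊗[k] Aᵐᵒᵖ`. -/
noncomputable def opE : A ⊗[k] A ≃ₗ[k] A ⊗[k] Aᵐᵒᵖ :=
  TensorProduct.congr (LinearEquiv.refl k A) (MulOpposite.opLinearEquiv k : A ≃ₗ[k] Aᵐᵒᵖ)

/-- The `k`-linear map `a ↦ Σ a⁽¹⁾ ⊗ S(a⁽²⁾)`. -/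
noncomputable def gammaMap : A →ₗ[k] A ⊗[k] A :=
  (TensorProduct.map LinearMap.id (HopfAlgebra.antipode (R := k))) ∘ₗ Coalgebra.comul

/-- The right `φ`-twisted action of `A` on `B = A ⊗[k] A`:
`(x ⊗ y) ·φ a = Σ x a⁽¹⁾ ⊗ S(a⁽²⁾) y`. -/
noncomputable def rphi (z : A ⊗[k] A) (a : A) : A ⊗[k] A :=
  (opE k A).symm (opE k A z * opE k A (gammaMap k A a))

/-- The submodule of relations defining the balanced tensor product
`B ⊗_A (A ⊗[k] A)`, where `B = A ⊗[k] A` carries the right `φ`-twisted `A`-action and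
`A ⊗[k] A` carries the left `A`-action via comultiplication, `a · w = Δ(a)w`. -/
noncomputable def relY : Submodule k ((A ⊗[k] A) ⊗[k] (A ⊗[k] A)) :=
  Submodule.span k {z | ∃ (x : A ⊗[k] A) (a : A) (w : A ⊗[k] A),
    z = (rphi k A x a) ⊗ₜ[k] w - x ⊗ₜ[k] ((Bialgebra.comulAlgHom k A a) * w)}

open Coalgebra HopfAlgebra LinearMap

section Galois

variable (R H : Type*) [CommSemiring R] [Semiring H] [HopfAlgebra R H]

noncomputable def galoisMap : H ⊗[R] H →ₗ[R] H ⊗[R] H :=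
  mul' R (H ⊗[R] H) ∘ₗ map comul (TensorProduct.mk R H H 1)

noncomputable def galoisMapInv : H ⊗[R] H →ₗ[R] H ⊗[R] H :=
  mul' R (H ⊗[R] H) ∘ₗ map ((antipode R).lTensor H ∘ₗ comul) (TensorProduct.mk R H H 1)

variable {R H}

@[simp] lemma galoisMap_tmul (a b : H) :
    galoisMap R H (a ⊗ₜ b) = comul a * (1 ⊗ₜ b) := by
  simp [galoisMap]

lemma galoisMapInv_tmul (a b : H) :
    galoisMapInv R H (a ⊗ₜ b) = (antipode R).lTensor H (comul a) * (1 ⊗ₜ b) := by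
  simp [galoisMapInv]

lemma lTensor_assoc_rTensor_comul_comul_eq_tmul_one {φ : H ⊗[R] H →ₗ[R] H}
    (hφ : φ ∘ₗ comul = Algebra.linearMap R H ∘ₗ counit) (a : H) :
    φ.lTensor H (TensorProduct.assoc R H H H (comul.rTensor H (comul a))) = a ⊗ₜ 1 := by
  rw [coassoc_apply, ← lTensor_comp_apply, hφ, lTensor_comp_apply, lTensor_counit_comul]
  simp

lemma galoisMap_comp_lTensor_antipode :
    galoisMap R H ∘ₗ (antipode R).lTensor H =
      (mul' R H ∘ₗ (antipode R).lTensor H).lTensor H ∘ₗ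
        (TensorProduct.assoc R H H H).toLinearMap ∘ₗ comul.rTensor H := by
  ext x y
  simp [← (ℛ R x).eq, Finset.sum_mul, sum_tmul, Algebra.TensorProduct.tmul_mul_tmul]

lemma galoisMapInv_eq :
    galoisMapInv R H =
      (mul' R H ∘ₗ (antipode R).rTensor H).lTensor H ∘ₗ
        (TensorProduct.assoc R H H H).toLinearMap ∘ₗ comul.rTensor H := by
  ext x y
  simp [galoisMapInv_tmul, ← (ℛ R x).eq, Finset.sum_mul, sum_tmul,
    Algebra.TensorProduct.tmul_mul_tmul]

lemma galoisMap_lTensor_antipode_comul (a : H) :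
    galoisMap R H ((antipode R).lTensor H (comul a)) = a ⊗ₜ 1 := by
  rw [← comp_apply, galoisMap_comp_lTensor_antipode, comp_apply, comp_apply]
  exact lTensor_assoc_rTensor_comul_comul_eq_tmul_one mul_antipode_lTensor_comul a

lemma galoisMapInv_comul (a : H) : galoisMapInv R H (comul a) = a ⊗ₜ 1 := by
  rw [galoisMapInv_eq, comp_apply, comp_apply]
  exact lTensor_assoc_rTensor_comul_comul_eq_tmul_one mul_antipode_rTensor_comul a

lemma galoisMap_mul_one_tmul (P : H ⊗[R] H) (b : H) :
    galoisMap R H (P * (1 ⊗ₜ b)) = galoisMap R H P * (1 ⊗ₜ b) := by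
  induction P using TensorProduct.induction_on with
  | zero => simp
  | tmul x y => simp [Algebra.TensorProduct.tmul_mul_tmul, mul_assoc]
  | add P Q hP hQ => simp [add_mul, hP, hQ]

lemma galoisMapInv_mul_one_tmul (P : H ⊗[R] H) (b : H) :
    galoisMapInv R H (P * (1 ⊗ₜ b)) = galoisMapInv R H P * (1 ⊗ₜ b) := by
  induction P using TensorProduct.induction_on with
  | zero => simp
  | tmul x y => simp [galoisMapInv_tmul, Algebra.TensorProduct.tmul_mul_tmul, mul_assoc]
  | add P Q hP hQ => simp [add_mul, hP, hQ]

lemma galoisMap_tmul_one_mul (a : H) (P : H ⊗[R] H) :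
    galoisMap R H ((a ⊗ₜ 1) * P) = comul a * galoisMap R H P := by
  induction P using TensorProduct.induction_on with
  | zero => simp
  | tmul x y => simp [Algebra.TensorProduct.tmul_mul_tmul, mul_assoc, Bialgebra.comul_mul]
  | add P Q hP hQ => simp [mul_add, hP, hQ]

lemma galoisMap_comp_galoisMapInv : galoisMap R H ∘ₗ galoisMapInv R H = .id :=
  TensorProduct.ext' fun a b => by
    rw [comp_apply, galoisMapInv_tmul, galoisMap_mul_one_tmul, galoisMap_lTensor_antipode_comul,
      id_apply, Algebra.TensorProduct.tmul_mul_tmul, one_mul, mul_one]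

lemma galoisMapInv_comp_galoisMap : galoisMapInv R H ∘ₗ galoisMap R H = .id :=
  TensorProduct.ext' fun a b => by
    rw [comp_apply, galoisMap_tmul, galoisMapInv_mul_one_tmul, galoisMapInv_comul, id_apply,
      Algebra.TensorProduct.tmul_mul_tmul, one_mul, mul_one]

variable (R H) in
noncomputable def galoisEquiv : H ⊗[R] H ≃ₗ[R] H ⊗[R] H :=
  .ofLinearMap _ _ galoisMap_comp_galoisMapInv galoisMapInv_comp_galoisMap

@[simp] lemma galoisEquiv_apply (P : H ⊗[R] H) : galoisEquiv R H P = galoisMap R H P := rfl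

@[simp] lemma galoisEquiv_symm_apply (P : H ⊗[R] H) :
    (galoisEquiv R H).symm P = galoisMapInv R H P := rfl

end Galois

lemma gammaMap_apply (a : A) : gammaMap k A a = (antipode k).lTensor A (comul a) := rfl

lemma rphi_tmul (x y a : A) :
    rphi k A (x ⊗ₜ y) a = (x ⊗ₜ 1) * gammaMap k A a * (1 ⊗ₜ y) := by
  rw [rphi]
  induction gammaMap k A a using TensorProduct.induction_on with
  | zero => simp
  | tmul p q => simp [opE, Algebra.TensorProduct.tmul_mul_tmul]
  | add P Q hP hQ => simp only [map_add, mul_add, add_mul, hP, hQ]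

lemma rphi_one_tmul (a b : A) : rphi k A (1 ⊗ₜ b) a = galoisMapInv k A (a ⊗ₜ b) := by
  rw [rphi_tmul, ← Algebra.TensorProduct.one_def, one_mul, galoisMapInv_tmul, gammaMap_apply]

lemma galoisMap_rphi (z : A ⊗[k] A) (a : A) :
    galoisMap k A (rphi k A z a) = galoisMap k A z * (a ⊗ₜ 1) := by
  induction z using TensorProduct.induction_on with
  | zero => simp [rphi]
  | tmul x y =>
    rw [rphi_tmul, galoisMap_mul_one_tmul, galoisMap_tmul_one_mul, gammaMap_apply,
      galoisMap_lTensor_antipode_comul, galoisMap_tmul, mul_assoc, mul_assoc,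
      Algebra.TensorProduct.tmul_mul_tmul, Algebra.TensorProduct.tmul_mul_tmul]
    simp
  | add P Q hP hQ => simp_all [rphi, add_mul]

noncomputable def comulAct : A ⊗[k] (A ⊗[k] A) →ₗ[k] A ⊗[k] A :=
  mul' k (A ⊗[k] A) ∘ₗ comul.rTensor (A ⊗[k] A)

@[simp] lemma comulAct_tmul (a : A) (w : A ⊗[k] A) : comulAct k A (a ⊗ₜ w) = comul a * w := by
  simp [comulAct]

noncomputable def comulActRightComm : (A ⊗[k] A) ⊗[k] (A ⊗[k] A) →ₗ[k] (A ⊗[k] A) ⊗[k] A :=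
  (comulAct k A).rTensor A ∘ₗ (TensorProduct.rightComm k A A (A ⊗[k] A)).toLinearMap

@[simp] lemma comulActRightComm_tmul (x y : A) (w : A ⊗[k] A) :
    comulActRightComm k A ((x ⊗ₜ y) ⊗ₜ w) = (comul x * w) ⊗ₜ y := by
  simp [comulActRightComm]

lemma comulActRightComm_mul_tmul_one_tmul (P : A ⊗[k] A) (a : A) (w : A ⊗[k] A) :
    comulActRightComm k A ((P * (a ⊗ₜ 1)) ⊗ₜ w) =
      comulActRightComm k A (P ⊗ₜ (comul a * w)) := by
  induction P using TensorProduct.induction_on with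
  | zero => simp
  | tmul x y => simp [Algebra.TensorProduct.tmul_mul_tmul, Bialgebra.comul_mul, mul_assoc]
  | add P Q hP hQ => simp_all [add_mul, add_tmul]

noncomputable def untwist : (A ⊗[k] A) ⊗[k] (A ⊗[k] A) →ₗ[k] (A ⊗[k] A) ⊗[k] A :=
  comulActRightComm k A ∘ₗ (galoisMap k A).rTensor (A ⊗[k] A)

lemma untwist_tmul (P w : A ⊗[k] A) :
    untwist k A (P ⊗ₜ w) = comulActRightComm k A (galoisMap k A P ⊗ₜ w) := rfl

lemma untwist_rphi_tmul (z : A ⊗[k] A) (a : A) (w : A ⊗[k] A) :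
    untwist k A (rphi k A z a ⊗ₜ w) = untwist k A (z ⊗ₜ (comul a * w)) := by
  rw [untwist_tmul, untwist_tmul, galoisMap_rphi, comulActRightComm_mul_tmul_one_tmul]

lemma relY_le_ker_untwist : relY k A ≤ ker (untwist k A) := by
  rw [relY, Submodule.span_le]
  rintro _ ⟨z, a, w, rfl⟩
  simp [untwist_rphi_tmul]

lemma untwist_galoisMapInv_tmul (a b c : A) :
    untwist k A (galoisMapInv k A (a ⊗ₜ b) ⊗ₜ (1 ⊗ₜ c)) = galoisMap k A (a ⊗ₜ c) ⊗ₜ b := by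
  rw [untwist_tmul, ← comp_apply (galoisMap k A), galoisMap_comp_galoisMapInv]
  simp

abbrev BalancedTensor : Type _ := ((A ⊗[k] A) ⊗[k] (A ⊗[k] A)) ⧸ relY k A

lemma mk_rphi_tmul (z : A ⊗[k] A) (a : A) (w : A ⊗[k] A) :
    (Submodule.Quotient.mk (rphi k A z a ⊗ₜ w) : BalancedTensor k A) =
      Submodule.Quotient.mk (z ⊗ₜ (comul a * w)) :=
  (Submodule.Quotient.eq _).2 (Submodule.subset_span ⟨z, a, w, rfl⟩)

noncomputable def yMap : A ⊗[k] (A ⊗[k] A) →ₗ[k] BalancedTensor k A :=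
  (relY k A).mkQ ∘ₗ map (galoisMapInv k A) (TensorProduct.mk k A A 1) ∘ₗ
    (TensorProduct.assoc k A A A).symm.toLinearMap

lemma yMap_tmul (a b c : A) :
    yMap k A (a ⊗ₜ (b ⊗ₜ c)) = Submodule.Quotient.mk (rphi k A (1 ⊗ₜ b) a ⊗ₜ (1 ⊗ₜ c)) := by
  rw [rphi_one_tmul]
  simp [yMap]

noncomputable def balancedUntwist : BalancedTensor k A →ₗ[k] (A ⊗[k] A) ⊗[k] A :=
  (relY k A).liftQ (untwist k A) (relY_le_ker_untwist k A)

lemma balancedUntwist_comp_yMap :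
    balancedUntwist k A ∘ₗ yMap k A =
      ((TensorProduct.congr (.refl k A) (TensorProduct.comm k A A)).trans
        ((TensorProduct.assoc k A A A).symm.trans
          (TensorProduct.congr (galoisEquiv k A) (.refl k A)))).toLinearMap := by
  ext a b c
  simp [balancedUntwist, yMap, untwist_galoisMapInv_tmul]

lemma yMap_injective : Function.Injective (yMap k A) := by
  refine Function.Injective.of_comp (f := balancedUntwist k A) ?_
  rw [← coe_comp, balancedUntwist_comp_yMap]
  exact LinearEquiv.injective _

lemma mk_one_tmul_mem_range_yMap (b : A) (w : A ⊗[k] A) :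
    (Submodule.Quotient.mk ((1 ⊗ₜ b) ⊗ₜ w) : BalancedTensor k A) ∈ range (yMap k A) := by
  rw [← (galoisEquiv k A).apply_symm_apply w]
  induction (galoisEquiv k A).symm w using TensorProduct.induction_on with
  | zero => simp
  | tmul a c =>
    refine ⟨a ⊗ₜ (b ⊗ₜ c), ?_⟩
    rw [yMap_tmul, mk_rphi_tmul, galoisEquiv_apply, galoisMap_tmul]
  | add P Q hP hQ =>
    rw [map_add, tmul_add, Submodule.Quotient.mk_add]
    exact add_mem hP hQ

lemma mk_tmul_mem_range_yMap (P w : A ⊗[k] A) :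
    (Submodule.Quotient.mk (P ⊗ₜ w) : BalancedTensor k A) ∈ range (yMap k A) := by
  rw [← (galoisEquiv k A).symm_apply_apply P]
  induction galoisEquiv k A P using TensorProduct.induction_on with
  | zero => simp
  | tmul a b =>
    rw [galoisEquiv_symm_apply, ← rphi_one_tmul, mk_rphi_tmul]
    exact mk_one_tmul_mem_range_yMap k A b _
  | add P Q hP hQ =>
    rw [map_add, add_tmul, Submodule.Quotient.mk_add]
    exact add_mem hP hQ

lemma yMap_surjective : Function.Surjective (yMap k A) := by
  rw [← range_eq_top, eq_top_iff]
  rintro q -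
  obtain ⟨z, rfl⟩ := Submodule.Quotient.mk_surjective _ q
  induction z using TensorProduct.induction_on with
  | zero => simp
  | tmul P w => exact mk_tmul_mem_range_yMap k A P w
  | add z z' hz hz' =>
    rw [Submodule.Quotient.mk_add]
    exact add_mem hz hz'

lemma yMap_bijective : Function.Bijective (yMap k A) :=
  ⟨yMap_injective k A, yMap_surjective k A⟩

theorem Y_basis_of_balanced_tensor
    {ι : Type*} (𝔸 : Module.Basis ι k A) :
    ∃ bq : Module.Basis (ι × ι × ι) k (((A ⊗[k] A) ⊗[k] (A ⊗[k] A)) ⧸ relY k A),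
      ∀ t : ι × ι × ι,
        bq t = Submodule.Quotient.mk
          ((rphi k A ((1 : A) ⊗ₜ[k] 𝔸 t.2.1) (𝔸 t.1)) ⊗ₜ[k] ((1 : A) ⊗ₜ[k] 𝔸 t.2.2)) :=
  ⟨(𝔸.tensorProduct (𝔸.tensorProduct 𝔸)).map
      (.ofBijective (yMap k A) (yMap_bijective k A)),
    fun t => by
      rw [Module.Basis.map_apply, Module.Basis.tensorProduct_apply',
        Module.Basis.tensorProduct_apply', LinearEquiv.ofBijective_apply, yMap_tmul]⟩
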